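/- arXiv:1210.1200 — 5 statements merged into one kernel-verified Lean document; each statement's English description precedes it below -/
import Mathlib

section
/- For every infinite binary stream s, the set Blues s of blue positions of s is almost full if and only if the set Reds s of red positions of s is streamless, i.e., every duplicate-free colist over Reds s is finite. -/
/-- The suffix of a stream at position `n`. -/
def suff (s : ℕ → Bool) (n : ℕ) : ℕ → Bool := fun k => s (n + k)

/-- The weak-until predicate transformer (greatest fixed point, impredicative). -/
def W (X : (ℕ → Bool) → Prop) (s : ℕ → Bool) : Prop :=
  ∃ Y : (ℕ → Bool) → Prop, Y s ∧
    ∀ t, Y t → (t 0 = true → X (suff t 1)) ∧ (t 0 = false → Y (suff t 1))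

/-- A stream is almost always blue: least fixed point of `W`. -/
def pre (s : ℕ → Bool) : Prop :=
  ∀ P : (ℕ → Bool) → Prop, (∀ t, W P t → P t) → P s

/-- The strong-until predicate transformer (inductive). -/
inductive U (X : (ℕ → Bool) → Prop) : (ℕ → Bool) → Prop
  | red : ∀ t, t 0 = true → X (suff t 1) → U X t
  | blue : ∀ t, t 0 = false → U X (suff t 1) → U X t

/-- A stream is infinitely often red: greatest fixed point of `U`. -/
def rep (s : ℕ → Bool) : Prop :=
  ∃ P : (ℕ → Bool) → Prop, P s ∧ ∀ t, P t → U P t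

/-- `succs s n m` : `m` is the position following the first red position at or after `n`. -/
def succs (s : ℕ → Bool) (n m : ℕ) : Prop :=
  ∃ l, n ≤ l ∧ (∀ k, n ≤ k → k < l → s k = false) ∧ s l = true ∧ m = l + 1

/-- The set of red positions of a stream. -/
def Reds (s : ℕ → Bool) : Set ℕ := {n | s n = true}

/-- The set of blue positions of a stream. -/
def Blues (s : ℕ → Bool) : Set ℕ := {n | s n = false}

/-- A colist is duplicate-free over `A`: entries lie in `A` and entries at
distinct positions are distinct. -/
def DupFree (l : Stream'.Seq ℕ) (A : Set ℕ) : Prop :=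
  (∀ n x, l.get? n = some x → x ∈ A) ∧
  (∀ m n x y, m ≠ n → l.get? m = some x → l.get? n = some y → x ≠ y)

/-- A set of naturals is streamless if every duplicate-free colist over it is finite. -/
def Streamless (A : Set ℕ) : Prop :=
  ∀ l : Stream'.Seq ℕ, DupFree l A → l.Terminates

/-- A set of naturals is almost full if every strictly increasing sequence hits it. -/
def AlmostFull (A : Set ℕ) : Prop :=
  ∀ i : ℕ → ℕ, StrictMono i → ∃ n, i n ∈ A

/-- A colist is a descending chain of the relation `r` starting at `x`. -/
def IsDescChain (r : ℕ → ℕ → Prop) (x : ℕ) (l : Stream'.Seq ℕ) : Prop :=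
  (∀ y, l.get? 0 = some y → r x y) ∧
  (∀ n a b, l.get? n = some a → l.get? (n + 1) = some b → r a b)

/-- `r` is strongly normalizing at `x`: every descending chain starting at `x` is finite. -/
def SN (r : ℕ → ℕ → Prop) (x : ℕ) : Prop :=
  ∀ l : Stream'.Seq ℕ, IsDescChain r x l → l.Terminates

/-- `n` is antifounded wrt `r`: greatest fixed point of the one-step descent operator. -/
def af (r : ℕ → ℕ → Prop) (n : ℕ) : Prop :=
  ∃ Q : ℕ → Prop, Q n ∧ ∀ k, Q k → ∃ m, r k m ∧ Q m

/-- `atmost n s`: fewer than `n` red positions up to every position `m`. -/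
def atmost (n : ℕ) (s : ℕ → Bool) : Prop :=
  ∀ m, ((Finset.range (m + 1)).filter (fun k => s k = true)).card < n

/-- Iterates of the weak-until operator starting from the empty predicate. -/
def Fiter : ℕ → (ℕ → Bool) → Prop
  | 0 => fun _ => False
  | n + 1 => W (Fiter n)

/-- The ω-iterate of the weak-until operator. -/
def Fomega (s : ℕ → Bool) : Prop := ∃ n, Fiter n s

/-- The Lesser Principle of Omniscience. -/
def LPO : Prop := ∀ s : ℕ → Bool, (∃ n, s n = true) ∨ (∀ n, s n = false)

/-- Markov's Principle. -/
def MP : Prop := ∀ s : ℕ → Bool, ¬(∀ n, s n = false) → ∃ n, s n = true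

/-- Noetherian sets of naturals. -/
inductive Noeth : Set ℕ → Prop
  | intro : ∀ A : Set ℕ, (∀ x ∈ A, Noeth (A \ {x})) → Noeth A

/-! Classically both sides say that `Reds s` is finite: an infinite set of naturals is enumerated
in increasing order by `Nat.nth`, which is both a strictly increasing sequence avoiding the
complement and a duplicate-free infinite colist; conversely a bound on a finite set is
eventually exceeded by every strictly increasing sequence, and a duplicate-free infinite
colist injects `ℕ` into its set. -/

open Stream'.Seq

lemma dupFree_ofStream {f : ℕ → ℕ} {A : Set ℕ} (hf : Function.Injective f)
    (hA : ∀ n, f n ∈ A) : DupFree (ofStream f) A := by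
  refine ⟨fun n x hx => ?_, fun m n x y hmn hm hn => ?_⟩
  · obtain rfl : f n = x := Option.some.inj hx
    exact hA n
  · obtain rfl : f m = x := Option.some.inj hm
    obtain rfl : f n = y := Option.some.inj hn
    exact hf.ne hmn

lemma DupFree.infinite_of_not_terminates {l : Stream'.Seq ℕ} {A : Set ℕ} (hl : DupFree l A)
    (h : ¬l.Terminates) : A.Infinite := by
  have hget (n : ℕ) : l.get? n = some (l.toStream h n) := (Option.some_get _).symm
  exact Set.infinite_of_injective_forall_mem
    (fun m n hmn => by_contra fun hne => hl.2 m n _ _ hne (hget m) (hget n) hmn)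
    (fun n => hl.1 n _ (hget n))

theorem streamless_iff_finite (A : Set ℕ) : Streamless A ↔ A.Finite := by
  refine ⟨fun h => ?_, fun hA l hl => by_contra fun hl' => hl.infinite_of_not_terminates hl' hA⟩
  by_contra hA
  obtain ⟨n, hn⟩ := h _ (dupFree_ofStream (Nat.nth_injective hA) (Nat.nth_mem_of_infinite hA))
  exact Option.some_ne_none _ hn

theorem almostFull_iff_finite_compl (A : Set ℕ) : AlmostFull A ↔ Aᶜ.Finite := by
  refine ⟨fun h => ?_, fun hA i hi => ?_⟩
  · by_contra hA
    obtain ⟨n, hn⟩ := h _ (Nat.nth_strictMono hA)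
    exact Nat.nth_mem_of_infinite hA n hn
  · obtain ⟨N, hN⟩ := hA.bddAbove
    refine ⟨N + 1, by_contra fun hiA => ?_⟩
    have : N + 1 ≤ i (N + 1) := hi.le_apply
    have : i (N + 1) ≤ N := hN hiA
    omega

lemma compl_blues (s : ℕ → Bool) : (Blues s)ᶜ = Reds s := by
  ext n
  simp [Blues, Reds]

theorem stmt_0 : ∀ s : ℕ → Bool, AlmostFull (Blues s) ↔ Streamless (Reds s) := by
  intro s
  rw [almostFull_iff_finite_compl, streamless_iff_finite, compl_blues]
end

section
/- For every predicate X on streams, every stream s, and every natural number n: W X (s|n) holds if and only if for all m with n ≻ₛ m, X (s|m) holds. -/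
/-!
Left to right: the invariant witnessing `W X (s|n)` survives along the blue positions from `n`
up to the first red position `ℓ`, where it yields `X (s|ℓ+1)`. Right to left: the suffixes
`s|k` all of whose `≻ₛ`-successors satisfy `X` form an invariant, because `k ≻ₛ k + 1` when `k`
is red and `k` has the same successors as `k + 1` when `k` is blue.
-/

theorem suff_suff (s : ℕ → Bool) (n k : ℕ) : suff (suff s n) k = suff s (n + k) := by
  funext i
  simp only [suff, Nat.add_assoc]

theorem W.unfold_suff {X : (ℕ → Bool) → Prop} {s : ℕ → Bool} {n : ℕ} (hW : W X (suff s n)) :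
    (s n = true → X (suff s (n + 1))) ∧ (s n = false → W X (suff s (n + 1))) := by
  obtain ⟨Y, hY, hstep⟩ := hW
  rw [← suff_suff]
  exact ⟨(hstep _ hY).1, fun hblue => ⟨Y, (hstep _ hY).2 hblue, hstep⟩⟩

theorem W.suff_of_forall_blue {X : (ℕ → Bool) → Prop} {s : ℕ → Bool} {n l : ℕ}
    (hW : W X (suff s n)) (hnl : n ≤ l) (hblue : ∀ k, n ≤ k → k < l → s k = false) :
    W X (suff s l) := by
  induction l, hnl using Nat.le_induction with
  | base => exact hW
  | succ l hnl ih =>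
    exact (ih fun k hk hkl => hblue k hk (by omega)).unfold_suff.2 (hblue l hnl (by omega))

theorem succs_self_of_red {s : ℕ → Bool} {n : ℕ} (hred : s n = true) : succs s n (n + 1) :=
  ⟨n, le_rfl, fun _ hnk hkn => absurd hkn (not_lt.2 hnk), hred, rfl⟩

theorem succs_of_blue {s : ℕ → Bool} {n m : ℕ} (hblue : s n = false) (hm : succs s (n + 1) m) :
    succs s n m := by
  obtain ⟨l, hnl, hblues, hred, rfl⟩ := hm
  refine ⟨l, by omega, fun k hnk hkl => ?_, hred, rfl⟩
  rcases hnk.eq_or_lt with rfl | hnk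
  · exact hblue
  · exact hblues k hnk hkl

theorem stmt_1 : ∀ (X : (ℕ → Bool) → Prop) (s : ℕ → Bool) (n : ℕ),
    W X (suff s n) ↔ ∀ m, succs s n m → X (suff s m) := by
  intro X s n
  constructor
  · rintro hW m ⟨l, hnl, hblue, hred, rfl⟩
    exact (hW.suff_of_forall_blue hnl hblue).unfold_suff.1 hred
  · intro h
    refine ⟨fun t => ∃ k, t = suff s k ∧ ∀ m, succs s k m → X (suff s m), ⟨n, rfl, h⟩, ?_⟩
    rintro _ ⟨k, rfl, hk⟩
    rw [suff_suff]
    exact ⟨fun hred => hk _ (succs_self_of_red hred),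
      fun hblue => ⟨k + 1, rfl, fun m hm => hk m (succs_of_blue hblue hm)⟩⟩
end

section
/- For every stream s: the relation ≻ₛ is strongly normalizing at 0 (every descending ≻ₛ-chain starting at 0 is finite) if and only if the set Reds s of red positions of s is streamless. -/
/-!
Classically both sides say that `s` has only finitely many red positions. A duplicate-free
infinite colist over `A` is an injection `ℕ → A`, so streamless sets are exactly the finite ones.
An infinite `≻ₛ`-chain is strictly increasing and every step passes a red position, so it forces
infinitely many reds; conversely, when reds are unbounded every position has a `≻ₛ`-successor,
and iterating a choice of successors gives an infinite chain.
-/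

namespace Stream'.Seq

variable {α : Type*}

theorem exists_get?_eq_some_of_not_terminates {l : Seq α} (h : ¬l.Terminates) :
    ∃ a : ℕ → α, ∀ n, l.get? n = some (a n) :=
  have hs := not_terminates_iff.mp h
  ⟨fun n => (l.get? n).get (hs n), fun n => (Option.some_get (hs n)).symm⟩

theorem not_terminates_ofStream (a : Stream' α) : ¬(ofStream a).Terminates :=
  fun ⟨_, hn⟩ => Option.some_ne_none _ hn

end Stream'.Seq

open Stream'.Seq

theorem not_streamless_iff_exists_injective {A : Set ℕ} :
    ¬Streamless A ↔ ∃ a : ℕ → ℕ, Function.Injective a ∧ ∀ n, a n ∈ A := by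
  constructor
  · intro h
    obtain ⟨l, ⟨hmem, hne⟩, hl⟩ : ∃ l, DupFree l A ∧ ¬l.Terminates := by
      simpa [Streamless] using h
    obtain ⟨a, ha⟩ := exists_get?_eq_some_of_not_terminates hl
    refine ⟨a, fun m n hmn => ?_, fun n => hmem n _ (ha n)⟩
    by_contra h
    exact hne m n _ _ h (ha m) (ha n) hmn
  · rintro ⟨a, ha, haA⟩ hA
    refine not_terminates_ofStream a (hA _ ⟨fun n x hx => ?_, fun m n x y hmn hx hy => ?_⟩)
    · obtain rfl := Option.some_inj.mp hx
      exact haA n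
    · obtain rfl := Option.some_inj.mp hx
      obtain rfl := Option.some_inj.mp hy
      exact ha.ne hmn

theorem not_sn_iff_exists_chain {r : ℕ → ℕ → Prop} {x : ℕ} :
    ¬SN r x ↔ ∃ a : ℕ → ℕ, r x (a 0) ∧ ∀ n, r (a n) (a (n + 1)) := by
  constructor
  · intro h
    obtain ⟨l, ⟨hfirst, hstep⟩, hl⟩ : ∃ l, IsDescChain r x l ∧ ¬l.Terminates := by
      simpa [SN] using h
    obtain ⟨a, ha⟩ := exists_get?_eq_some_of_not_terminates hl
    exact ⟨a, hfirst _ (ha 0), fun n => hstep n _ _ (ha n) (ha (n + 1))⟩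
  · rintro ⟨a, h0, hstep⟩ hSN
    refine not_terminates_ofStream a (hSN _ ⟨fun y hy => ?_, fun n b c hb hc => ?_⟩)
    · obtain rfl := Option.some_inj.mp hy
      exact h0
    · obtain rfl := Option.some_inj.mp hb
      obtain rfl := Option.some_inj.mp hc
      exact hstep n

theorem exists_chain_of_forall_exists {r : ℕ → ℕ → Prop} (h : ∀ n, ∃ m, r n m) (x : ℕ) :
    ∃ a : ℕ → ℕ, r x (a 0) ∧ ∀ n, r (a n) (a (n + 1)) := by
  choose f hf using h
  exact ⟨fun n => f^[n + 1] x, hf x, fun n => by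
    simpa only [Function.iterate_succ_apply'] using hf _⟩

theorem exists_succs_of_exists_red {s : ℕ → Bool} {n : ℕ} (h : ∃ l, n ≤ l ∧ s l = true) :
    ∃ m, succs s n m := by
  classical
  refine ⟨Nat.find h + 1, Nat.find h, (Nat.find_spec h).1, fun k hnk hk => ?_,
    (Nat.find_spec h).2, rfl⟩
  simpa [hnk] using Nat.find_min h hk

theorem succs.lt {s : ℕ → Bool} {n m : ℕ} (h : succs s n m) : n < m := by
  obtain ⟨l, hnl, -, -, rfl⟩ := h
  exact Nat.lt_succ_of_le hnl

theorem sn_succs_iff_finite (s : ℕ → Bool) (x : ℕ) : SN (succs s) x ↔ (Reds s).Finite := by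
  rw [← not_iff_not, not_sn_iff_exists_chain, Set.not_finite]
  constructor
  · rintro ⟨a, -, hstep⟩
    have hmono : StrictMono a := strictMono_nat_of_lt_succ fun n => (hstep n).lt
    refine Set.infinite_of_forall_exists_gt fun N => ?_
    obtain ⟨l, hl, -, hred, -⟩ := hstep (N + 1)
    exact ⟨l, hred, (Nat.lt_succ_self N).trans_le (hmono.le_apply.trans hl)⟩
  · intro hinf
    exact exists_chain_of_forall_exists (fun n => exists_succs_of_exists_red <|
      (hinf.exists_gt n).imp fun l ⟨hred, hnl⟩ => ⟨hnl.le, hred⟩) x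

theorem stmt_3 : ∀ s : ℕ → Bool, SN (succs s) 0 ↔ Streamless (Reds s) := fun s => by
  rw [sn_succs_iff_finite, streamless_iff_finite]
end

section
/- For every natural number n and every stream s: Fⁿ s holds if and only if atmost n s, i.e., the n-th iterate of the weak-until operator starting from the empty predicate coincides with the predicate "fewer than n red positions". -/
/-!
Both sides obey the same one-step recursion on the head of the stream: a red head uses up one
of the allowed red positions, a blue head none. Hence `atmost (n + 1)` is itself a witness `Y`
for `W (atmost n)`, and conversely, for any witness `Y` of `W (atmost n) s`, induction on `m`
bounds the red positions of every stream in `Y` up to `m`.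
-/

-- `atmost n s` unfolds to `∀ m, redCount s m < n`.
def redCount (t : ℕ → Bool) (m : ℕ) : ℕ :=
  ((Finset.range (m + 1)).filter (fun k => t k = true)).card

lemma redCount_zero (t : ℕ → Bool) : redCount t 0 = (t 0).toNat := by
  cases h : t 0 <;> simp [redCount, Finset.filter_singleton, h]

lemma redCount_succ (t : ℕ → Bool) (m : ℕ) :
    redCount t (m + 1) = redCount (suff t 1) m + (t 0).toNat := by
  rw [redCount, redCount, Finset.card_filter, Finset.card_filter, Finset.sum_range_succ']
  cases t 0 <;> simp [suff, Nat.add_comm]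

lemma atmost_suff {n : ℕ} {t : ℕ → Bool} (h : atmost n t) : atmost n (suff t 1) := fun m =>
  calc redCount (suff t 1) m ≤ redCount t (m + 1) := by rw [redCount_succ]; omega
    _ < n := h (m + 1)

lemma atmost_succ_iff_of_head_true {n : ℕ} {t : ℕ → Bool} (h : t 0 = true) :
    atmost (n + 1) t ↔ atmost n (suff t 1) := by
  have hsucc (m : ℕ) : redCount t (m + 1) = redCount (suff t 1) m + 1 := by
    rw [redCount_succ, h, Bool.toNat_true]
  refine ⟨fun ht m => ?_, fun hs m => ?_⟩
  · have : redCount t (m + 1) < n + 1 := ht (m + 1)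
    rw [hsucc] at this
    exact Nat.lt_of_succ_lt_succ this
  · show redCount t m < n + 1
    cases m with
    | zero => have := hs 0; rw [redCount_zero, h, Bool.toNat_true]; omega
    | succ m => rw [hsucc]; exact Nat.succ_lt_succ (hs m)

theorem W_atmost_iff (n : ℕ) (s : ℕ → Bool) : W (atmost n) s ↔ atmost (n + 1) s := by
  refine ⟨fun ⟨Y, hYs, hY⟩ => ?_, fun hs => ⟨atmost (n + 1), hs, fun t ht => ?_⟩⟩
  · suffices ∀ m t, Y t → redCount t m < n + 1 from fun m => this m s hYs
    intro m
    induction m with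
    | zero =>
      intro t ht
      cases h0 : t 0
      · rw [redCount_zero, h0]; simp
      · exact (atmost_succ_iff_of_head_true h0).2 ((hY t ht).1 h0) 0
    | succ m ih =>
      intro t ht
      cases h0 : t 0
      · rw [redCount_succ, h0, Bool.toNat_false]; exact ih _ ((hY t ht).2 h0)
      · exact (atmost_succ_iff_of_head_true h0).2 ((hY t ht).1 h0) (m + 1)
  · exact ⟨fun h0 => (atmost_succ_iff_of_head_true h0).1 ht, fun _ => atmost_suff ht⟩

theorem stmt_7 : ∀ (n : ℕ) (s : ℕ → Bool), Fiter n s ↔ atmost n s := by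
  intro n
  induction n with
  | zero => exact fun s => ⟨False.elim, fun h => absurd (h 0) (Nat.not_lt_zero _)⟩
  | succ n ih =>
    have hFiter : Fiter n = atmost n := funext fun s => propext (ih s)
    intro s
    rw [Fiter, hFiter, W_atmost_iff]
end

section
/- For every stream s: if s is almost always blue (pre s), then it is not the case that s is not eventually all blue, i.e., ¬¬(∃ n, ∀ m ≥ n, s m = false). -/
/-! Unfolding `W X t` along the blue prefix of `t` up to its first red position `k` yields `X`
at the suffix after `k`. Hence "eventually blue" is a prefixed point of `W` (a stream without red
positions is blue everywhere), so `pre`, the least prefixed point, implies it. -/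

open Filter

theorem suff_zero (t : ℕ → Bool) : suff t 0 = t := by
  funext k
  simp [suff]

theorem suff_suff_s12 (t : ℕ → Bool) (i j : ℕ) : suff (suff t i) j = suff t (i + j) := by
  funext k
  simp only [suff, Nat.add_assoc]

namespace W

variable {X : (ℕ → Bool) → Prop} {t : ℕ → Bool}

theorem tail_of_blue (hW : W X t) (hblue : t 0 = false) : W X (suff t 1) :=
  let ⟨Y, hY, hstep⟩ := hW
  ⟨Y, (hstep t hY).2 hblue, hstep⟩

theorem tail_of_red (hW : W X t) (hred : t 0 = true) : X (suff t 1) :=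
  let ⟨_, hY, hstep⟩ := hW
  (hstep t hY).1 hred

theorem suff_of_blue_prefix (hW : W X t) {k : ℕ} (hblue : ∀ j < k, t j = false) :
    W X (suff t k) := by
  induction k with
  | zero => rwa [suff_zero]
  | succ k ih =>
    rw [← suff_suff_s12]
    exact (ih fun j hj => hblue j (by omega)).tail_of_blue
      (by simpa [suff] using hblue k (by omega))

theorem suff_of_first_red (hW : W X t) {k : ℕ} (hred : t k = true)
    (hblue : ∀ j < k, t j = false) : X (suff t (k + 1)) := by
  rw [← suff_suff_s12]
  exact (hW.suff_of_blue_prefix hblue).tail_of_red (by simpa [suff] using hred)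

end W

theorem eventually_of_eventually_suff {t : ℕ → Bool} {n : ℕ} {b : Bool}
    (h : ∀ᶠ m in atTop, suff t n m = b) : ∀ᶠ m in atTop, t m = b := by
  rw [← map_add_atTop_eq_nat n, eventually_map]
  simpa only [suff, Nat.add_comm] using h

theorem eventually_blue_of_W {t : ℕ → Bool}
    (hW : W (fun u => ∀ᶠ m in atTop, u m = false) t) : ∀ᶠ m in atTop, t m = false := by
  classical
  by_cases hred : ∃ k, t k = true
  · exact eventually_of_eventually_suff <|
      hW.suff_of_first_red (Nat.find_spec hred) fun j hj => by simpa using Nat.find_min hred hj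
  · push Not at hred
    exact Eventually.of_forall fun m => by simpa using hred m

theorem pre.eventually_blue {s : ℕ → Bool} (hs : pre s) : ∀ᶠ m in atTop, s m = false :=
  hs _ fun _ => eventually_blue_of_W

theorem stmt_12 : ∀ s : ℕ → Bool,
    pre s → ¬¬(∃ n, ∀ m, n ≤ m → s m = false) :=
  fun _ hs => not_not_intro (eventually_atTop.mp hs.eventually_blue)
end
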